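/- arXiv:1307.5246 — 7 statements merged into one kernel-verified Lean document; each statement's English description precedes it below -/
import Mathlib

section
/- Let G be a graph with minimum degree at least d, and let (A,B) be a partition of V with both parts of prescribed sizes that minimizes the number of cut edges |E(A,B)| among all partitions with those part sizes. Then for every x ∈ A and y ∈ B: if xy is not an edge then d_A(x) + d_B(y) ≥ d, and if xy is an edge then d_A(x) + d_B(y) ≥ d − 1. -/
open Finset

open scoped Classical in
noncomputable def degIn {V : Type*} (G : SimpleGraph V) (S : Finset V) (x : V) : ℕ :=
  (S.filter fun y => G.Adj x y).card

open scoped Classical in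
/-- The number of edges in the cut determined by A. -/
noncomputable def cutCard {V : Type*} [Fintype V] [DecidableEq V]
    (G : SimpleGraph V) (A : Finset V) : ℕ :=
  ∑ x ∈ A, degIn G Aᶜ x

lemma degIn_insert {V : Type*} [DecidableEq V] (G : SimpleGraph V) {S : Finset V} {a : V}
    (h : a ∉ S) (v : V) [Decidable (G.Adj v a)] :
    degIn G (insert a S) v = degIn G S v + (if G.Adj v a then 1 else 0) := by
  classical
  unfold degIn
  rw [Finset.filter_insert]
  by_cases hadj : G.Adj v a
  · rw [if_pos hadj, if_pos hadj,
      Finset.card_insert_of_notMem (fun hm => h (Finset.mem_filter.1 hm).1)]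
  · rw [if_neg hadj, if_neg hadj, add_zero]

lemma degIn_erase {V : Type*} [DecidableEq V] (G : SimpleGraph V) {S : Finset V} {a : V}
    (h : a ∈ S) (v : V) [Decidable (G.Adj v a)] :
    degIn G S v = degIn G (S.erase a) v + (if G.Adj v a then 1 else 0) := by
  conv_lhs => rw [← Finset.insert_erase h]
  exact degIn_insert G (Finset.notMem_erase a S) v

lemma degIn_erase_self {V : Type*} [DecidableEq V] (G : SimpleGraph V) (S : Finset V) (a : V) :
    degIn G (S.erase a) a = degIn G S a := by
  classical
  unfold degIn
  rw [Finset.filter_erase, Finset.erase_eq_of_notMem]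
  intro hm
  exact G.irrefl (Finset.mem_filter.1 hm).2

lemma degIn_eq_sum {V : Type*} (G : SimpleGraph V) [DecidableRel G.Adj] (S : Finset V) (v : V) :
    degIn G S v = ∑ w ∈ S, if G.Adj v w then 1 else 0 := by
  unfold degIn
  rw [Finset.filter_congr_decidable, Finset.card_filter]

lemma sum_ite_adj {V : Type*} (G : SimpleGraph V) [DecidableRel G.Adj] (T : Finset V) (a : V) :
    (∑ v ∈ T, if G.Adj v a then 1 else 0) = degIn G T a := by
  rw [degIn_eq_sum]
  exact Finset.sum_congr rfl fun v _ => if_congr (G.adj_comm v a) rfl rfl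

lemma degree_split {V : Type*} [Fintype V] [DecidableEq V] (G : SimpleGraph V)
    [DecidableRel G.Adj] (A : Finset V) (v : V) :
    G.degree v = degIn G A v + degIn G Aᶜ v := by
  rw [degIn_eq_sum, degIn_eq_sum, Finset.sum_add_sum_compl]
  rw [← SimpleGraph.card_neighborFinset_eq_degree, SimpleGraph.neighborFinset_eq_filter,
    Finset.card_filter]

/-- In a min-cut partition with prescribed part sizes of a graph with minimum degree d,
for x ∈ A, y ∈ B the sum of indegrees is at least d (non-adjacent) or d-1 (adjacent). -/
theorem min_cut_indegree_sum {V : Type*} [Fintype V] [DecidableEq V]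
    (G : SimpleGraph V) [DecidableRel G.Adj] (d : ℕ) (hmin : ∀ v, d ≤ G.degree v)
    (A : Finset V)
    (hopt : ∀ A' : Finset V, A'.card = A.card → cutCard G A ≤ cutCard G A')
    (x : V) (hx : x ∈ A) (y : V) (hy : y ∈ Aᶜ) :
    (¬ G.Adj x y → d ≤ degIn G A x + degIn G Aᶜ y) ∧
    (G.Adj x y → d ≤ degIn G A x + degIn G Aᶜ y + 1) := by
  have hyA : y ∉ A := Finset.mem_compl.1 hy
  have hxy : x ≠ y := fun h => hyA (h ▸ hx)
  set A' : Finset V := insert y (A.erase x) with hA'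
  have hyAe : y ∉ A.erase x := fun h => hyA (Finset.mem_of_mem_erase h)
  have hcard : A'.card = A.card := by
    rw [hA', Finset.card_insert_of_notMem hyAe, Finset.card_erase_of_mem hx]
    have : 0 < A.card := Finset.card_pos.2 ⟨x, hx⟩
    omega
  have hxB : x ∉ Aᶜ := by simp [hx]
  have hxBe : x ∉ Aᶜ.erase y := fun h => hxB (Finset.mem_of_mem_erase h)
  have hcompl : A'ᶜ = insert x (Aᶜ.erase y) := by
    ext v
    simp only [hA', Finset.mem_compl, Finset.mem_insert, Finset.mem_erase]
    constructor
    · intro h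
      by_cases hvx : v = x
      · exact Or.inl hvx
      · push_neg at h
        exact Or.inr ⟨h.1, fun hA => h.2 hvx hA⟩
    · rintro (rfl | ⟨hvy, hvA⟩)
      · rintro (h | ⟨hne, _⟩)
        · exact hxy h
        · exact hne rfl
      · rintro (h | ⟨_, hA⟩)
        · exact hvy h
        · exact hvA hA
  -- expand cutCard G A
  have hcutA : cutCard G A
      = (degIn G (Aᶜ.erase y) x + (if G.Adj x y then 1 else 0))
        + ((∑ v ∈ A.erase x, degIn G (Aᶜ.erase y) v) + degIn G (A.erase x) y) := by
    unfold cutCard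
    rw [← Finset.add_sum_erase A _ hx]
    congr 1
    · exact degIn_erase G hy x
    · rw [← sum_ite_adj G (A.erase x) y, ← Finset.sum_add_distrib]
      exact Finset.sum_congr rfl fun v _ => degIn_erase G hy v
  -- expand cutCard G A'
  have hcutA' : cutCard G A'
      = (degIn G Aᶜ y + (if G.Adj x y then 1 else 0))
        + ((∑ v ∈ A.erase x, degIn G (Aᶜ.erase y) v) + degIn G A x) := by
    unfold cutCard
    rw [hcompl, hA', Finset.sum_insert hyAe]
    congr 1
    · rw [degIn_insert G hxBe y, degIn_erase_self]
      congr 1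
      exact if_congr (G.adj_comm y x) rfl rfl
    · rw [← degIn_erase_self G A x, ← sum_ite_adj G (A.erase x) x, ← Finset.sum_add_distrib]
      exact Finset.sum_congr rfl fun v _ => degIn_insert G hxBe v
  have hineq := hopt A' hcard
  rw [hcutA, hcutA'] at hineq
  -- degree bounds
  have hdx : d ≤ degIn G A x + (degIn G (Aᶜ.erase y) x + (if G.Adj x y then 1 else 0)) := by
    have := hmin x
    rw [degree_split G A x, degIn_erase G hy x] at this
    exact this
  have hdy : d ≤ (degIn G (A.erase x) y + (if G.Adj y x then 1 else 0)) + degIn G Aᶜ y := by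
    have := hmin y
    rw [degree_split G A y, degIn_erase G hx y] at this
    exact this
  rw [show (if G.Adj y x then 1 else 0) = (if G.Adj x y then 1 else 0) from
    if_congr (G.adj_comm y x) rfl rfl] at hdy
  constructor <;> intro hadj <;> simp only [hadj, if_true, if_false] at hineq hdx hdy <;> omega
end

section
/- If a graph G has an internal bisection then its complement Ḡ has an external bisection. -/
/-!
If `x ∈ A` has `a` neighbours in `A` and `b` in `Aᶜ`, then in the complement it has
`|A| - 1 - a` neighbours in `A` and `|Aᶜ| - b` in `Aᶜ`. When `|A| ≤ |Aᶜ|`, the external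
condition for `x` in `Gᶜ` follows from `b ≤ a + 1`, which is weaker than the internal condition
`b ≤ a` in `G`. The same bisection therefore works.
-/

open Finset

namespace SimpleGraph

variable {V : Type*} (G : SimpleGraph V) (x : V)

theorem degIn_eq_card_filter [DecidablePred (G.Adj x)] (S : Finset V) :
    degIn G S x = #{y ∈ S | G.Adj x y} := by
  rw [degIn]
  congr

variable [DecidableEq V]

theorem degIn_add_degIn_compl [Fintype V] [Fintype (G.neighborSet x)] (S : Finset V) :
    degIn G S x + degIn G Sᶜ x = G.degree x := by
  classical
  rw [degIn_eq_card_filter, degIn_eq_card_filter, ← card_union_of_disjoint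
    (disjoint_filter_filter disjoint_compl_right), ← filter_union, union_compl,
    ← card_neighborFinset_eq_degree]
  congr 1
  ext y
  simp

theorem degIn_compl_add_degIn (S : Finset V) :
    degIn Gᶜ S x + degIn G S x = #(S.erase x) := by
  classical
  have h_compl : {y ∈ S | Gᶜ.Adj x y} = {y ∈ S.erase x | ¬G.Adj x y} := by
    ext y
    simp [and_left_comm, and_assoc, eq_comm]
  have h_adj : {y ∈ S | G.Adj x y} = {y ∈ S.erase x | G.Adj x y} := by
    ext y
    simp only [mem_filter, mem_erase, and_congr_left_iff]
    exact fun hxy => ⟨fun hy => ⟨hxy.ne.symm, hy⟩, And.right⟩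
  rw [degIn_eq_card_filter, degIn_eq_card_filter, h_compl, h_adj, add_comm,
    card_filter_add_card_filter_not]

theorem degree_compl_le_two_mul_degIn_compl [Fintype V] [Fintype (G.neighborSet x)]
    [Fintype (Gᶜ.neighborSet x)] {S : Finset V} (hS : #S ≤ #Sᶜ) (hx : x ∈ S)
    (h : G.degree x ≤ 2 * degIn G S x) : Gᶜ.degree x ≤ 2 * degIn Gᶜ Sᶜ x := by
  have hG := G.degIn_add_degIn_compl x S
  have hGc := Gᶜ.degIn_add_degIn_compl x S
  have hS_erase := G.degIn_compl_add_degIn x S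
  have hSc := G.degIn_compl_add_degIn x Sᶜ
  rw [card_erase_of_mem hx] at hS_erase
  rw [erase_eq_of_notMem (notMem_compl.mpr hx)] at hSc
  omega

variable [Fintype V] [DecidableRel G.Adj]

def IsInternalBisection (A : Finset V) : Prop :=
  2 * #A = Fintype.card V ∧ (∀ x ∈ A, G.degree x ≤ 2 * degIn G A x) ∧
    ∀ y ∈ Aᶜ, G.degree y ≤ 2 * degIn G Aᶜ y

def IsExternalBisection (A : Finset V) : Prop :=
  2 * #A = Fintype.card V ∧ (∀ x ∈ A, G.degree x ≤ 2 * degIn G Aᶜ x) ∧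
    ∀ y ∈ Aᶜ, G.degree y ≤ 2 * degIn G A y

variable {G} in
theorem IsInternalBisection.isExternalBisection_compl {A : Finset V}
    (hA : G.IsInternalBisection A) : Gᶜ.IsExternalBisection A := by
  obtain ⟨hcard, hA, hAc⟩ := hA
  have hsplit : #A = #Aᶜ := by
    have := card_add_card_compl A
    omega
  refine ⟨hcard, fun x hx => G.degree_compl_le_two_mul_degIn_compl x hsplit.le hx (hA x hx),
    fun y hy => ?_⟩
  simpa only [compl_compl] using G.degree_compl_le_two_mul_degIn_compl y
    (by rw [compl_compl]; exact hsplit.ge) hy (hAc y hy)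

end SimpleGraph

/-- If G has an internal bisection then its complement has an external bisection. -/
theorem internal_bisection_complement_external {V : Type*} [Fintype V] [DecidableEq V]
    (G : SimpleGraph V) [DecidableRel G.Adj]
    (h : ∃ A : Finset V, 2 * A.card = Fintype.card V ∧
      (∀ x ∈ A, G.degree x ≤ 2 * degIn G A x) ∧
      (∀ y ∈ Aᶜ, G.degree y ≤ 2 * degIn G Aᶜ y)) :
    ∃ A : Finset V, 2 * A.card = Fintype.card V ∧
      (∀ x ∈ A, Gᶜ.degree x ≤ 2 * degIn Gᶜ Aᶜ x) ∧
      (∀ y ∈ Aᶜ, Gᶜ.degree y ≤ 2 * degIn Gᶜ A y) :=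
  let ⟨A, hA⟩ := h
  ⟨A, SimpleGraph.IsInternalBisection.isExternalBisection_compl hA⟩
end

section
/- If all vertex degrees of a graph G are even and the complement Ḡ has an external bisection, then G has an internal bisection. -/
open Finset

lemma degIn_add_degIn_compl {V : Type*} [Fintype V] [DecidableEq V] (G : SimpleGraph V)
    (S : Finset V) (x : V) : degIn G S x + degIn Gᶜ S x = (S.erase x).card := by
  classical
  unfold degIn
  rw [← Finset.card_filter_add_card_filter_not (s := S.erase x)
    (p := fun y => G.Adj x y)]
  congr 1
  · exact congrArg Finset.card (by
      ext y
      simp only [mem_filter, mem_erase]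
      exact ⟨fun ⟨hS, h⟩ => ⟨⟨h.ne', hS⟩, h⟩, fun ⟨⟨_, hS⟩, h⟩ => ⟨hS, h⟩⟩)
  · exact congrArg Finset.card (by
      ext y
      simp only [mem_filter, mem_erase, SimpleGraph.compl_adj]
      constructor
      · rintro ⟨hS, hne, h⟩; exact ⟨⟨fun e => hne e.symm, hS⟩, h⟩
      · rintro ⟨⟨hne, hS⟩, h⟩; exact ⟨hS, fun e => hne e.symm, h⟩)

lemma degIn_union {V : Type*} [DecidableEq V] (G : SimpleGraph V)
    {S T : Finset V} (hd : Disjoint S T) (x : V) :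
    degIn G (S ∪ T) x = degIn G S x + degIn G T x := by
  classical
  unfold degIn
  rw [Finset.filter_union, Finset.card_union_of_disjoint
    (hd.mono (Finset.filter_subset _ _) (Finset.filter_subset _ _))]

lemma degree_eq_degIn_add {V : Type*} [Fintype V] [DecidableEq V] (G : SimpleGraph V)
    [DecidableRel G.Adj] (A : Finset V) (x : V) :
    G.degree x = degIn G A x + degIn G Aᶜ x := by
  classical
  have h1 : G.degree x = degIn G univ x := by
    unfold degIn
    rw [← SimpleGraph.card_neighborFinset_eq_degree]
    exact congrArg Finset.card (by ext y; simp [SimpleGraph.mem_neighborFinset])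
  rw [h1, ← Finset.union_compl A, degIn_union G (disjoint_compl_right) x]

/-- If all degrees of G are even and the complement has an external bisection,
then G has an internal bisection. -/
theorem complement_external_to_internal_bisection {V : Type*} [Fintype V] [DecidableEq V]
    (G : SimpleGraph V) [DecidableRel G.Adj]
    (heven : ∀ v, Even (G.degree v))
    (h : ∃ A : Finset V, 2 * A.card = Fintype.card V ∧
      (∀ x ∈ A, Gᶜ.degree x ≤ 2 * degIn Gᶜ Aᶜ x) ∧
      (∀ y ∈ Aᶜ, Gᶜ.degree y ≤ 2 * degIn Gᶜ A y)) :
    ∃ A : Finset V, 2 * A.card = Fintype.card V ∧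
      (∀ x ∈ A, G.degree x ≤ 2 * degIn G A x) ∧
      (∀ y ∈ Aᶜ, G.degree y ≤ 2 * degIn G Aᶜ y) := by
  obtain ⟨A, hcard, hA, hAc⟩ := h
  have hAcc : Aᶜ.card = A.card := by
    have := Finset.card_compl A
    omega
  refine ⟨A, hcard, ?_, ?_⟩
  · intro x hx
    have hx' : x ∉ Aᶜ := by simpa using hx
    have e1 := degIn_add_degIn_compl G A x
    have e2 := degIn_add_degIn_compl G Aᶜ x
    have e3 := degree_eq_degIn_add G A x
    have e4 := degree_eq_degIn_add Gᶜ A x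
    rw [Finset.card_erase_of_mem hx] at e1
    rw [Finset.erase_eq_of_notMem hx'] at e2
    have hpos : 1 ≤ A.card := Finset.card_pos.mpr ⟨x, hx⟩
    obtain ⟨k, hk⟩ := heven x
    have hext := hA x hx
    omega
  · intro y hy
    have hy' : y ∉ A := by simpa using hy
    have e1 := degIn_add_degIn_compl G A y
    have e2 := degIn_add_degIn_compl G Aᶜ y
    have e3 := degree_eq_degIn_add G A y
    have e4 := degree_eq_degIn_add Gᶜ A y
    rw [Finset.card_erase_of_mem hy] at e2
    rw [Finset.erase_eq_of_notMem hy'] at e1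
    have hpos : 1 ≤ Aᶜ.card := Finset.card_pos.mpr ⟨y, hy⟩
    obtain ⟨k, hk⟩ := heven y
    have hext := hAc y hy
    omega
end

section
/- If an (n−4)-regular graph G on n vertices has an internal partition, then either the complement Ḡ (a cubic graph) has an external bisection, or Ḡ has an independent set of size at least n/2 − 1. -/
/-!
Each part of an internal partition has more than (n - 4)/2 vertices, and n is even by the
handshake lemma (an odd-regular graph has an even number of vertices), so the smaller part has
n/2 - 1 or n/2 vertices. If it has n/2 - 1, each of its vertices is adjacent in G to all the
others, so it is a clique of G, i.e. an independent set of Ḡ. If both parts have n/2 vertices,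
a vertex has at most (n - 4) - (n/2 - 2) = n/2 - 2 neighbours of G across, hence at least two
neighbours of Ḡ across.
-/

open Finset

namespace SimpleGraph

theorem IsRegularOfDegree.even_card_of_odd {V : Type*} [Fintype V] {G : SimpleGraph V}
    [DecidableRel G.Adj] {d : ℕ} (hG : G.IsRegularOfDegree d) (hd : Odd d) :
    Even (Fintype.card V) := by
  have := G.even_card_odd_degree_vertices
  rwa [filter_true_of_mem fun v _ => hG.degree_eq v ▸ hd, card_univ] at this

end SimpleGraph

section degIn

variable {V : Type*} (G : SimpleGraph V) (S : Finset V) {x : V}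

theorem degIn_eq_card_filter [DecidableRel G.Adj] : degIn G S x = #{y ∈ S | G.Adj x y} := by
  rw [degIn]
  congr

theorem degIn_le_card_sub_one (hx : x ∈ S) : degIn G S x ≤ #S - 1 := by
  classical
  rw [← card_erase_of_mem hx, degIn_eq_card_filter]
  exact card_le_card fun y hy => by
    rw [mem_filter] at hy
    exact mem_erase.2 ⟨(G.ne_of_adj hy.2).symm, hy.1⟩

theorem add_one_le_card_of_le_degIn {k : ℕ} (hx : x ∈ S) (hk : k ≤ degIn G S x) :
    k + 1 ≤ #S := by
  have := degIn_le_card_sub_one G S hx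
  have := card_pos.2 ⟨x, hx⟩
  omega

theorem isClique_of_card_sub_one_le_degIn (hS : ∀ x ∈ S, #S - 1 ≤ degIn G S x) :
    G.IsClique (S : Set V) := by
  classical
  intro x hx y hy hxy
  by_contra hnadj
  have hsub : {z ∈ S | G.Adj x z} ⊆ (S.erase x).erase y := fun z hz => by
    rw [mem_filter] at hz
    refine mem_erase.2 ⟨?_, mem_erase.2 ⟨(G.ne_of_adj hz.2).symm, hz.1⟩⟩
    rintro rfl
    exact hnadj hz.2
  have hcard := card_le_card hsub
  rw [card_erase_of_mem (mem_erase.2 ⟨hxy.symm, hy⟩), card_erase_of_mem hx,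
    ← degIn_eq_card_filter] at hcard
  have := hS x hx
  have := one_lt_card.2 ⟨x, hx, y, hy, hxy⟩
  omega

variable [DecidableEq V] [DecidableRel G.Adj]

theorem degIn_compl_add_degIn (hx : x ∉ S) : degIn Gᶜ S x + degIn G S x = #S := by
  rw [degIn_eq_card_filter, degIn_eq_card_filter, add_comm,
    ← card_filter_add_card_filter_not (s := S) (G.Adj x)]
  congr 2
  ext y
  simp only [mem_filter, SimpleGraph.compl_adj, ne_eq, and_congr_right_iff]
  rintro hy
  exact and_iff_right (by rintro rfl; exact hx hy)

variable [Fintype V]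

theorem degIn_add_degIn_compl_s13 (x : V) : degIn G S x + degIn G Sᶜ x = G.degree x := by
  rw [degIn_eq_card_filter, degIn_eq_card_filter,
    ← card_union_of_disjoint (disjoint_filter_filter disjoint_compl_right),
    ← filter_union, union_compl, ← G.card_neighborFinset_eq_degree, G.neighborFinset_eq_filter]

theorem sub_le_degIn_compl_of_le_degIn {d k : ℕ} (hG : G.IsRegularOfDegree d) (hx : x ∉ S)
    (hk : k ≤ degIn G Sᶜ x) : #S + k - d ≤ degIn Gᶜ S x := by
  have := degIn_compl_add_degIn G S hx
  have := degIn_add_degIn_compl_s13 G S x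
  rw [hG.degree_eq] at this
  omega

end degIn

/-- If an (n-4)-regular graph has an internal partition, then its cubic complement has an
external bisection or an independent set of size at least n/2 - 1. -/
theorem n_sub_four_regular_internal_partition {V : Type*} [Fintype V] [DecidableEq V]
    (G : SimpleGraph V) [DecidableRel G.Adj]
    (hreg : G.IsRegularOfDegree (Fintype.card V - 4))
    (h : ∃ A : Finset V, A.Nonempty ∧ Aᶜ.Nonempty ∧
      (∀ x ∈ A, (Fintype.card V - 4) / 2 ≤ degIn G A x) ∧
      (∀ y ∈ Aᶜ, (Fintype.card V - 4) / 2 ≤ degIn G Aᶜ y)) :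
    (∃ A : Finset V, 2 * A.card = Fintype.card V ∧
      (∀ x ∈ A, 2 ≤ degIn Gᶜ Aᶜ x) ∧ (∀ y ∈ Aᶜ, 2 ≤ degIn Gᶜ A y)) ∨
    (∃ S : Finset V, Fintype.card V / 2 - 1 ≤ S.card ∧
      ∀ x ∈ S, ∀ y ∈ S, x ≠ y → ¬ Gᶜ.Adj x y) := by
  obtain ⟨A, ⟨a, ha⟩, ⟨b, hb⟩, hA, hAc⟩ := h
  set n := Fintype.card V
  rcases lt_or_ge n 4 with hn | hn
  · exact Or.inr ⟨∅, by omega, by simp⟩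
  obtain ⟨m, hm⟩ : Even n := by
    by_contra hodd
    obtain ⟨k, hk⟩ := Nat.not_even_iff_odd.1 hodd
    exact hodd (hreg.even_card_of_odd ⟨k - 2, by omega⟩)
  have hcardA := add_one_le_card_of_le_degIn G A ha (hA a ha)
  have hcardAc := add_one_le_card_of_le_degIn G Aᶜ hb (hAc b hb)
  have hsum : #A + #Aᶜ = n := card_add_card_compl A
  rcases (by omega : #A + 1 = m ∨ #A = m ∨ #Aᶜ + 1 = m) with hsmall | hhalf | hlarge
  · refine Or.inr ⟨A, by omega, G.isIndepSet_compl.2 ?_⟩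
    exact isClique_of_card_sub_one_le_degIn G A fun x hx => (by omega : _ ≤ _).trans (hA x hx)
  · refine Or.inl ⟨A, by omega, fun x hx => ?_, fun y hy => ?_⟩
    · have := sub_le_degIn_compl_of_le_degIn G Aᶜ hreg (notMem_compl.2 hx)
        ((compl_compl A).symm ▸ hA x hx)
      omega
    · have := sub_le_degIn_compl_of_le_degIn G A hreg (mem_compl.1 hy) (hAc y hy)
      omega
  · refine Or.inr ⟨Aᶜ, by omega, G.isIndepSet_compl.2 ?_⟩
    exact isClique_of_card_sub_one_le_degIn G Aᶜ fun x hx => (by omega : _ ≤ _).trans (hAc x hx)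
end

section
/- Every cubic (3-regular) graph that is 3-edge-colorable (class-1) has an external bisection: a partition of its vertices into two equal-size parts such that every vertex has at least 2 of its 3 neighbors in the opposite part. -/
open Finset

private lemma key_iter {V : Type*} (f0 f1 : V → V) (h0 : ∀ x, f0 (f0 x) = x)
    (h1 : ∀ x, f1 (f1 x) = x) (hf0 : ∀ x, f0 x ≠ x) (hf1 : ∀ x, f1 x ≠ x) :
    ∀ m : ℕ, ∀ x, (f1 ∘ f0)^[m] x ≠ f0 x := by
  intro m
  induction m using Nat.strong_induction_on with
  | _ m ih =>
    match m with
    | 0 => intro x h; exact hf0 x (by simpa using h.symm)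
    | 1 =>
      intro x h
      simp only [Function.iterate_one, Function.comp_apply] at h
      exact hf1 (f0 x) h
    | (m+2) =>
      intro x h
      apply ih m (by omega) ((f1 ∘ f0) x)
      rw [← Function.iterate_succ_apply]
      show (f1 ∘ f0)^[m+1] x = f0 ((f1 ∘ f0) x)
      have : f0 ((f1 ∘ f0) x) = f0 (f1 (f0 x)) := rfl
      rw [this, ← h, Function.iterate_succ_apply' (f1 ∘ f0) (m+1) x]
      show (f1 ∘ f0)^[m+1] x = f0 (f1 (f1 (f0 ((f1 ∘ f0)^[m+1] x))))
      rw [h1, h0]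

private lemma exists_flip {α : Type*} (F : α → α) (hinv : ∀ a, F (F a) = a)
    (hne : ∀ a, F a ≠ a) : ∃ t : α → Bool, ∀ a, t (F a) ≠ t a := by
  classical
  let r2 : Setoid α := ⟨fun p q => q = p ∨ q = F p, by
    constructor
    · intro a; exact Or.inl rfl
    · intro a b h
      rcases h with h | h
      · exact Or.inl h.symm
      · right; rw [h, hinv]
    · intro a b c hab hbc
      rcases hab with h | h <;> rcases hbc with h' | h' <;> subst h <;> subst h'
      · exact Or.inl rfl
      · exact Or.inr rfl
      · exact Or.inr rfl
      · exact Or.inl (hinv a) ⟩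
  refine ⟨fun a => decide ((Quotient.mk r2 a).out = a), fun a => ?_⟩
  have hmk : Quotient.mk r2 (F a) = Quotient.mk r2 a :=
    Quotient.sound (Or.inr (hinv a).symm)
  have ho : a = (Quotient.mk r2 a).out ∨ a = F ((Quotient.mk r2 a).out) :=
    Quotient.mk_out a
  show decide ((Quotient.mk r2 (F a)).out = F a) ≠ decide ((Quotient.mk r2 a).out = a)
  rw [hmk]
  set o := (Quotient.mk r2 a).out with hodef
  rcases ho with h | h
  · simp [← h, (Ne.symm (hne a) : a ≠ F a)]
  · have : o = F a := by rw [h, hinv]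
    simp [this, hne a]

private lemma exists_coloring {V : Type*} (f0 f1 : V → V) (h0 : ∀ x, f0 (f0 x) = x)
    (h1 : ∀ x, f1 (f1 x) = x) (hf0 : ∀ x, f0 x ≠ x) (hf1 : ∀ x, f1 x ≠ x) :
    ∃ s : V → Bool, (∀ x, s (f0 x) ≠ s x) ∧ (∀ x, s (f1 x) ≠ s x) := by
  classical
  set σ : V → V := f1 ∘ f0 with hσ
  have hinj : Function.Injective σ := by
    intro a b hab
    have : f0 (f1 (σ a)) = f0 (f1 (σ b)) := by rw [hab]
    simpa [hσ, Function.comp, h0, h1] using this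
  -- conjugation identity
  have hconj : ∀ (k : ℕ) (z : V), σ^[k] (f0 (σ^[k] z)) = f0 z := by
    intro k
    induction k with
    | zero => intro z; simp
    | succ k ihk =>
      intro z
      rw [Function.iterate_succ_apply σ k, Function.iterate_succ_apply' σ k z]
      have : σ (f0 (σ (σ^[k] z))) = f0 (σ^[k] z) := by
        show f1 (f0 (f0 (f1 (f0 (σ^[k] z))))) = f0 (σ^[k] z)
        rw [h0, h1]
      rw [this, ihk]
  let r : Setoid V := ⟨fun x y => ∃ m n : ℕ, σ^[m] x = σ^[n] y, by
    constructor
    · intro a; exact ⟨0, 0, rfl⟩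
    · rintro a b ⟨m, n, h⟩; exact ⟨n, m, h.symm⟩
    · rintro a b c ⟨m, n, h⟩ ⟨p, q, h'⟩
      refine ⟨p + m, n + q, ?_⟩
      rw [Function.iterate_add_apply, h, ← Function.iterate_add_apply,
        Nat.add_comm p n, Function.iterate_add_apply, h', ← Function.iterate_add_apply]⟩
  have hresp : ∀ x y, (∃ m n : ℕ, σ^[m] x = σ^[n] y) → ∃ m n : ℕ, σ^[m] (f0 x) = σ^[n] (f0 y) := by
    rintro x y ⟨m, n, h⟩
    refine ⟨n, m, ?_⟩
    have hx : f0 x = σ^[m] (f0 (σ^[m] x)) := (hconj m x).symm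
    have hy : f0 y = σ^[n] (f0 (σ^[n] y)) := (hconj n y).symm
    rw [hx, hy, ← Function.iterate_add_apply, ← Function.iterate_add_apply, h,
      Nat.add_comm n m]
  let F : Quotient r → Quotient r := Quotient.map f0 hresp
  have hFmk : ∀ x : V, F (Quotient.mk r x) = Quotient.mk r (f0 x) := fun x => rfl
  have hFinv : ∀ q, F (F q) = q := by
    intro q
    induction q using Quotient.ind with
    | _ x => rw [hFmk, hFmk, h0]
  have hFne : ∀ q, F q ≠ q := by
    intro q
    induction q using Quotient.ind with
    | _ x =>
      rw [hFmk]
      intro hq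
      obtain ⟨m, n, h⟩ : ∃ m n : ℕ, σ^[m] (f0 x) = σ^[n] x := Quotient.exact hq
      rcases le_or_gt m n with hmn | hmn
      · obtain ⟨k, rfl⟩ := Nat.exists_eq_add_of_le hmn
        rw [Function.iterate_add_apply] at h
        have := hinj.iterate m h
        exact key_iter f0 f1 h0 h1 hf0 hf1 k x this.symm
      · obtain ⟨k, hk⟩ := Nat.exists_eq_add_of_lt hmn
        subst hk
        rw [show n + k + 1 = n + (k+1) by ring, Function.iterate_add_apply] at h
        have h2 : σ^[k+1] (f0 x) = x := hinj.iterate n h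
        have h3 : σ^[k+1] (f0 x) = f0 (f0 x) := by rw [h2, h0]
        exact key_iter f0 f1 h0 h1 hf0 hf1 (k+1) (f0 x) h3
  obtain ⟨t, ht⟩ := exists_flip F hFinv hFne
  refine ⟨fun x => t (Quotient.mk r x), fun x => ?_, fun x => ?_⟩
  · show t (Quotient.mk r (f0 x)) ≠ t (Quotient.mk r x)
    rw [← hFmk]
    exact ht _
  · show t (Quotient.mk r (f1 x)) ≠ t (Quotient.mk r x)
    have : Quotient.mk r (f1 x) = Quotient.mk r (f0 x) := by
      apply Quotient.sound
      refine ⟨0, 1, ?_⟩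
      show f1 x = σ (f0 x)
      show f1 x = f1 (f0 (f0 x))
      rw [h0]
    rw [this, ← hFmk]
    exact ht _

/-- Every class-1 cubic graph (one admitting a proper 3-edge-coloring) has an external
bisection: equal parts with every vertex having at least 2 of its 3 neighbors opposite. -/
theorem class_one_cubic_external_bisection {V : Type*} [Fintype V] [DecidableEq V]
    (G : SimpleGraph V) [DecidableRel G.Adj] (hreg : G.IsRegularOfDegree 3)
    (c : V → V → Fin 3)
    (hsymm : ∀ x y, G.Adj x y → c x y = c y x)
    (hproper : ∀ x y z, G.Adj x y → G.Adj x z → y ≠ z → c x y ≠ c x z) :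
    ∃ A : Finset V, 2 * A.card = Fintype.card V ∧
      (∀ x ∈ A, 2 ≤ degIn G Aᶜ x) ∧ (∀ y ∈ Aᶜ, 2 ≤ degIn G A y) := by
  classical
  -- existence of a unique neighbor of each color
  have hex : ∀ (i : Fin 3) (x : V), ∃ y, G.Adj x y ∧ c x y = i := by
    intro i x
    have h3 : (G.neighborFinset x).card = 3 := by
      rw [G.card_neighborFinset_eq_degree]; exact hreg x
    have hinjOn : Set.InjOn (c x) (G.neighborFinset x) := by
      intro y hy z hz hyz
      by_contra hne
      exact hproper x y z (by simpa using hy) (by simpa using hz) hne hyz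
    have hcard : ((G.neighborFinset x).image (c x)).card = 3 := by
      rw [Finset.card_image_of_injOn hinjOn, h3]
    have huniv : (G.neighborFinset x).image (c x) = Finset.univ := by
      apply Finset.eq_univ_of_card
      simpa using hcard
    have : i ∈ (G.neighborFinset x).image (c x) := huniv ▸ Finset.mem_univ i
    obtain ⟨y, hy, hcy⟩ := Finset.mem_image.mp this
    exact ⟨y, by simpa using hy, hcy⟩
  choose f hadj hcol using hex
  -- uniqueness: f i is the unique neighbor of color i
  have huniq : ∀ (i : Fin 3) (x y : V), G.Adj x y → c x y = i → f i x = y := by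
    intro i x y hxy hc
    by_contra hne
    exact hproper x (f i x) y (hadj i x) hxy hne ((hcol i x).trans hc.symm)
  have hinv : ∀ (i : Fin 3) (x : V), f i (f i x) = x := by
    intro i x
    apply huniq i (f i x) x (hadj i x).symm
    rw [← hsymm x (f i x) (hadj i x)]
    exact hcol i x
  have hnefix : ∀ (i : Fin 3) (x : V), f i x ≠ x := fun i x => (hadj i x).ne'
  have hne01 : ∀ x : V, f 0 x ≠ f 1 x := by
    intro x h
    have := (hcol 0 x).symm.trans (h ▸ hcol 1 x)
    exact absurd this (by decide)
  obtain ⟨s, hs0, hs1⟩ := exists_coloring (f 0) (f 1) (hinv 0) (hinv 1) (hnefix 0) (hnefix 1)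
  set A : Finset V := Finset.univ.filter (fun x => s x = true) with hA
  have hmemA : ∀ x : V, x ∈ A ↔ s x = true := by intro x; simp [hA]
  have hmemAc : ∀ x : V, x ∈ Aᶜ ↔ s x = false := by
    intro x; simp [Finset.mem_compl, hmemA]
  have hflipA : ∀ x : V, x ∈ A → f 0 x ∈ Aᶜ ∧ f 1 x ∈ Aᶜ := by
    intro x hx
    rw [hmemA] at hx
    constructor <;> rw [hmemAc]
    · have := hs0 x; rw [hx] at this; simpa using this
    · have := hs1 x; rw [hx] at this; simpa using this
  have hflipAc : ∀ x : V, x ∈ Aᶜ → f 0 x ∈ A ∧ f 1 x ∈ A := by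
    intro x hx
    rw [hmemAc] at hx
    constructor <;> rw [hmemA]
    · have := hs0 x; rw [hx] at this; simpa using this
    · have := hs1 x; rw [hx] at this; simpa using this
  refine ⟨A, ?_, ?_, ?_⟩
  · have hbij : A.card = Aᶜ.card := by
      apply Finset.card_bij (fun x _ => f 0 x)
      · intro x hx; exact (hflipA x hx).1
      · intro x hx y hy h
        have : f 0 (f 0 x) = f 0 (f 0 y) := by rw [h]
        rwa [hinv, hinv] at this
      · intro y hy
        exact ⟨f 0 y, (hflipAc y hy).1, hinv 0 y⟩
    have hcc := Finset.card_add_card_compl A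
    omega
  · intro x hx
    have key : 2 ≤ (Aᶜ.filter (fun y => G.Adj x y)).card := by
     have hsub : ({f 0 x, f 1 x} : Finset V) ⊆ Aᶜ.filter (fun y => G.Adj x y) := by
       intro y hy
       rw [Finset.mem_filter]
       rcases Finset.mem_insert.mp hy with h | h
       · exact h ▸ ⟨(hflipA x hx).1, hadj 0 x⟩
       · rw [Finset.mem_singleton] at h
         exact h ▸ ⟨(hflipA x hx).2, hadj 1 x⟩
     calc 2 = ({f 0 x, f 1 x} : Finset V).card := (Finset.card_pair (hne01 x)).symm
       _ ≤ _ := Finset.card_le_card hsub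
    unfold degIn
    convert key using 3
  · intro x hx
    have key : 2 ≤ (A.filter (fun y => G.Adj x y)).card := by
     have hsub : ({f 0 x, f 1 x} : Finset V) ⊆ A.filter (fun y => G.Adj x y) := by
       intro y hy
       rw [Finset.mem_filter]
       rcases Finset.mem_insert.mp hy with h | h
       · exact h ▸ ⟨(hflipAc x hx).1, hadj 0 x⟩
       · rw [Finset.mem_singleton] at h
         exact h ▸ ⟨(hflipAc x hx).2, hadj 1 x⟩
     calc 2 = ({f 0 x, f 1 x} : Finset V).card := (Finset.card_pair (hne01 x)).symm
       _ ≤ _ := Finset.card_le_card hsub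
    unfold degIn
    convert key using 3
end

section
/- Every 4-regular graph that is properly 4-edge-colorable (class-1) has an external bisection: a partition of its vertices into two equal-size parts such that every vertex has at least 2 of its 4 neighbors in the opposite part. -/
/-!
Colour classes 0 and 1 of the edge colouring are perfect matchings, i.e. fixed-point-free
involutions `f` and `g` of the vertex set. Their union is bipartite: with `σ = g * f`, the
dihedral relations `f σ f = σ⁻¹ = g σ g` show that `f x = σ ^ m x` would force a fixed point
of `f` (for `m` even) or of `g` (for `m` odd). So `f` and `g` induce one and the same
fixed-point-free involution on the cycles of `σ`, and choosing one cycle from each of its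
pairs gives a set `A` swapped with its complement by both `f` and `g`. Then `f` is a bijection
`A ≃ Aᶜ`, and every vertex has its two distinct neighbours `f x`, `g x` on the other side.
-/

open Finset

open Function Equiv

theorem Function.Involutive.exists_set_apply_mem_iff_notMem {β : Type*} {τ : β → β}
    (hτ : Involutive τ) (hτ' : ∀ q, τ q ≠ q) : ∃ B : Set β, ∀ q, τ q ∈ B ↔ q ∉ B := by
  refine ⟨{q | WellOrderingRel q (τ q)}, fun q => ?_⟩
  simp only [Set.mem_ofPred_eq, hτ q]
  refine ⟨fun h h' => asymm h h', fun h => ?_⟩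
  rcases trichotomous_of WellOrderingRel q (τ q) with h' | h' | h'
  exacts [absurd h' h, absurd h'.symm (hτ' q), h']

section Group
variable {G : Type*} [Group G] {a b : G}

theorem semiconjBy_mul_inv_right (ha : a * a = 1) (hb : b * b = 1) :
    SemiconjBy a (b * a) (b * a)⁻¹ := by
  rw [SemiconjBy, mul_inv_rev, inv_eq_of_mul_eq_one_left ha, inv_eq_of_mul_eq_one_left hb,
    mul_assoc]

theorem semiconjBy_mul_inv_left (ha : a * a = 1) (hb : b * b = 1) :
    SemiconjBy b (b * a) (b * a)⁻¹ := by
  rw [SemiconjBy, mul_inv_rev, inv_eq_of_mul_eq_one_left ha, inv_eq_of_mul_eq_one_left hb,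
    ← mul_assoc, hb, one_mul, mul_assoc, hb, mul_one]

end Group

namespace Equiv.Perm
variable {α : Type*} {f g σ : Perm α} {x y : α}

theorem apply_zpow_eq_self_of_semiconjBy_inv (h : SemiconjBy f σ σ⁻¹) {k : ℤ}
    (hx : f x = (σ ^ (2 * k)) x) : f ((σ ^ k) x) = (σ ^ k) x := by
  rw [← mul_apply, (h.zpow_right k).eq, mul_apply, hx, ← mul_apply, inv_zpow', ← zpow_add]
  congr 2
  ring

theorem SameCycle.apply_of_semiconjBy_inv (h : SemiconjBy f σ σ⁻¹) (hxy : σ.SameCycle x y) :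
    σ.SameCycle (f x) (f y) := by
  rw [← sameCycle_inv, ← mul_inv_eq_of_eq_mul h.eq]
  exact hxy.conj

theorem not_sameCycle_mul_apply (hf : f * f = 1) (hg : g * g = 1) (hf' : ∀ x, f x ≠ x)
    (hg' : ∀ x, g x ≠ x) (x : α) : ¬ (g * f).SameCycle x (f x) := by
  rintro ⟨m, hm⟩
  obtain ⟨k, rfl | rfl⟩ := Int.even_or_odd' m
  · exact hf' _ (apply_zpow_eq_self_of_semiconjBy_inv (semiconjBy_mul_inv_right hf hg) hm.symm)
  · have hgx : g x = ((g * f) ^ (2 * (k + 1))) x := by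
      rw [show 2 * (k + 1) = 1 + (2 * k + 1) by ring, zpow_one_add, mul_apply, hm,
        mul_apply, ← mul_apply f f, hf, one_apply]
    exact hg' _ (apply_zpow_eq_self_of_semiconjBy_inv (semiconjBy_mul_inv_left hf hg) hgx)

theorem exists_set_apply_mem_iff_notMem (hf : f * f = 1) (hg : g * g = 1) (hf' : ∀ x, f x ≠ x)
    (hg' : ∀ x, g x ≠ x) : ∃ A : Set α, ∀ x, (f x ∈ A ↔ x ∉ A) ∧ (g x ∈ A ↔ x ∉ A) := by
  let s := SameCycle.setoid (g * f)
  let τ : Quotient s → Quotient s :=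
    Quotient.map f fun _ _ => SameCycle.apply_of_semiconjBy_inv (semiconjBy_mul_inv_right hf hg)
  have hτ : Involutive τ := Quotient.ind fun x => by
    simp only [τ, Quotient.map_mk, ← mul_apply, hf, one_apply]
  have hτ' : ∀ q, τ q ≠ q := Quotient.ind fun x h =>
    not_sameCycle_mul_apply hf hg hf' hg' x (Quotient.exact h).symm
  -- `g x = (g * f) (f x)`
  have hgf : ∀ x, (⟦g x⟧ : Quotient s) = τ ⟦x⟧ := fun x => Quotient.sound <| by
    show (g * f).SameCycle (g x) (f x)
    rw [← sameCycle_apply_right, ← mul_apply, mul_assoc, hf, mul_one]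
  obtain ⟨B, hB⟩ := hτ.exists_set_apply_mem_iff_notMem hτ'
  exact ⟨{x | ⟦x⟧ ∈ B}, fun x => ⟨hB ⟦x⟧, by simp only [Set.mem_ofPred_eq, hgf, hB]⟩⟩

end Equiv.Perm

theorem Finset.two_mul_card_eq_of_apply_mem_iff_notMem {α : Type*} [Fintype α] [DecidableEq α]
    (f : Perm α) {A : Finset α} (hA : ∀ x, f x ∈ A ↔ x ∉ A) : 2 * #A = Fintype.card α := by
  have hmap : A.map f.toEmbedding = Aᶜ := by
    ext y
    rw [mem_map_equiv, mem_compl, iff_not_comm, ← hA, apply_symm_apply]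
  rw [← card_add_card_compl A, ← hmap, card_map, two_mul]

namespace SimpleGraph
variable {V : Type*} (G : SimpleGraph V)

theorem two_le_degIn {S : Finset V} {x u v : V} (hu : u ∈ S) (hv : v ∈ S) (hxu : G.Adj x u)
    (hxv : G.Adj x v) (huv : u ≠ v) : 2 ≤ degIn G S x :=
  one_lt_card.2 ⟨u, by simp [hu, hxu], v, by simp [hv, hxv], huv⟩

theorem forall_two_le_degIn_compl_of_apply_mem_iff_notMem [Fintype V] [DecidableEq V]
    {f g : V → V} {S : Finset V} (hf : ∀ x, f x ∈ S ↔ x ∉ S) (hg : ∀ x, g x ∈ S ↔ x ∉ S)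
    (hadj : ∀ x, G.Adj x (f x) ∧ G.Adj x (g x)) (hne : ∀ x, f x ≠ g x) :
    (∀ x ∈ S, 2 ≤ degIn G Sᶜ x) ∧ (∀ y ∈ Sᶜ, 2 ≤ degIn G S y) :=
  ⟨fun x hx => G.two_le_degIn (mem_compl.2 fun h => (hf x).1 h hx)
      (mem_compl.2 fun h => (hg x).1 h hx) (hadj x).1 (hadj x).2 (hne x),
    fun y hy => G.two_le_degIn ((hf y).2 (mem_compl.1 hy)) ((hg y).2 (mem_compl.1 hy))
      (hadj y).1 (hadj y).2 (hne y)⟩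

variable {G} [Fintype V] [DecidableRel G.Adj] {k : ℕ} {c : V → V → Fin k}

theorem IsRegularOfDegree.exists_adj_color_eq (hreg : G.IsRegularOfDegree k)
    (hproper : ∀ x y z, G.Adj x y → G.Adj x z → y ≠ z → c x y ≠ c x z) (i : Fin k) (x : V) :
    ∃ y, G.Adj x y ∧ c x y = i := by
  have hinj : Set.InjOn (c x) (G.neighborFinset x) := fun y hy z hz =>
    not_imp_not.1 (hproper x y z (by simpa using hy) (by simpa using hz))
  have himage : (G.neighborFinset x).image (c x) = univ :=
    eq_univ_of_card _ <| by
      rw [card_image_of_injOn hinj, card_neighborFinset_eq_degree, hreg x, Fintype.card_fin]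
  obtain ⟨y, hy, hcy⟩ := mem_image.1 (himage ▸ mem_univ i)
  exact ⟨y, by simpa using hy, hcy⟩

theorem IsRegularOfDegree.exists_involutions_of_edgeColoring (hreg : G.IsRegularOfDegree k)
    (hsymm : ∀ x y, G.Adj x y → c x y = c y x)
    (hproper : ∀ x y z, G.Adj x y → G.Adj x z → y ≠ z → c x y ≠ c x z) :
    ∃ m : Fin k → Perm V, ∀ i, m i * m i = 1 ∧ ∀ x, G.Adj x (m i x) ∧ c x (m i x) = i := by
  choose nf hadj hcol using hreg.exists_adj_color_eq hproper
  have hinv : ∀ i, Involutive (nf i) := fun i x => by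
    by_contra hne
    exact hproper _ _ _ (hadj i (nf i x)) (hadj i x).symm hne
      (by rw [hcol, ← hsymm _ _ (hadj i x), hcol])
  exact ⟨fun i => (hinv i).toPerm, fun i => ⟨Equiv.ext (hinv i), fun x => ⟨hadj i x, hcol i x⟩⟩⟩

end SimpleGraph

/-- Every class-1 4-regular graph (one admitting a proper 4-edge-coloring) has an external
bisection: equal parts with every vertex having at least 2 of its 4 neighbors opposite. -/
theorem class_one_four_regular_external_bisection {V : Type*} [Fintype V] [DecidableEq V]
    (G : SimpleGraph V) [DecidableRel G.Adj] (hreg : G.IsRegularOfDegree 4)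
    (c : V → V → Fin 4)
    (hsymm : ∀ x y, G.Adj x y → c x y = c y x)
    (hproper : ∀ x y z, G.Adj x y → G.Adj x z → y ≠ z → c x y ≠ c x z) :
    ∃ A : Finset V, 2 * A.card = Fintype.card V ∧
      (∀ x ∈ A, 2 ≤ degIn G Aᶜ x) ∧ (∀ y ∈ Aᶜ, 2 ≤ degIn G A y) := by
  classical
  obtain ⟨m, hm⟩ := hreg.exists_involutions_of_edgeColoring hsymm hproper
  have hadj (i : Fin 4) (x : V) : G.Adj x (m i x) := ((hm i).2 x).1
  have hne (x : V) : m 0 x ≠ m 1 x := fun h => by simpa [h, ((hm 1).2 x).2] using ((hm 0).2 x).2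
  obtain ⟨A, hA⟩ := Perm.exists_set_apply_mem_iff_notMem (hm 0).1 (hm 1).1
    (fun x => (hadj 0 x).ne') (fun x => (hadj 1 x).ne')
  have hS (x : V) : (m 0 x ∈ A.toFinset ↔ x ∉ A.toFinset) ∧
      (m 1 x ∈ A.toFinset ↔ x ∉ A.toFinset) := by
    simpa using hA x
  exact ⟨A.toFinset, two_mul_card_eq_of_apply_mem_iff_notMem (m 0) fun x => (hS x).1,
    G.forall_two_le_degIn_compl_of_apply_mem_iff_notMem (fun x => (hS x).1) (fun x => (hS x).2)
      (fun x => ⟨hadj 0 x, hadj 1 x⟩) hne⟩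
end

section
/- For every m > 2, the graph Q_m has no internal partition, where Q_m is the join of X with the empty graph on m+2 vertices, and X is the disjoint union of the complete graph K_{m−1} with an arbitrary (m−2)-regular graph on m+1 vertices. Q_m is 2m-regular on 3m+2 vertices. -/
open Finset

/-- The graph `Q m`: the join of `X` with the empty graph on `m+2` vertices, where `X` is
the disjoint union of the complete graph on `m-1` vertices with a given graph `X₂` on
`m+1` vertices (intended to be `(m-2)`-regular). Vertices: `(Fin (m-1) ⊕ Fin (m+1)) ⊕ Fin (m+2)`. -/
def Q (m : ℕ) (X₂ : SimpleGraph (Fin (m + 1))) :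
    SimpleGraph ((Fin (m - 1) ⊕ Fin (m + 1)) ⊕ Fin (m + 2)) :=
  SimpleGraph.fromRel fun a b =>
    match a, b with
    | Sum.inl (Sum.inl _), Sum.inl (Sum.inl _) => True
    | Sum.inl (Sum.inr x), Sum.inl (Sum.inr y) => X₂.Adj x y
    | Sum.inl _, Sum.inr _ => True
    | Sum.inr _, Sum.inl _ => True
    | _, _ => False

section Aux

variable {m : ℕ} {X₂ : SimpleGraph (Fin (m + 1))}

@[simp] lemma Q_adj_EK (e : Fin (m+2)) (k : Fin (m-1)) :
    (Q m X₂).Adj (Sum.inr e) (Sum.inl (Sum.inl k)) := by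
  simp [Q, SimpleGraph.fromRel_adj]

@[simp] lemma Q_adj_EX (e : Fin (m+2)) (u : Fin (m+1)) :
    (Q m X₂).Adj (Sum.inr e) (Sum.inl (Sum.inr u)) := by
  simp [Q, SimpleGraph.fromRel_adj]

@[simp] lemma Q_adj_EE (e f : Fin (m+2)) :
    ¬ (Q m X₂).Adj (Sum.inr e) (Sum.inr f) := by
  simp [Q, SimpleGraph.fromRel_adj]

@[simp] lemma Q_adj_KK (k k' : Fin (m-1)) :
    (Q m X₂).Adj (Sum.inl (Sum.inl k)) (Sum.inl (Sum.inl k')) ↔ k ≠ k' := by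
  simp [Q, SimpleGraph.fromRel_adj]

@[simp] lemma Q_adj_KX (k : Fin (m-1)) (u : Fin (m+1)) :
    ¬ (Q m X₂).Adj (Sum.inl (Sum.inl k)) (Sum.inl (Sum.inr u)) := by
  simp [Q, SimpleGraph.fromRel_adj]

@[simp] lemma Q_adj_XK (u : Fin (m+1)) (k : Fin (m-1)) :
    ¬ (Q m X₂).Adj (Sum.inl (Sum.inr u)) (Sum.inl (Sum.inl k)) := by
  simp [Q, SimpleGraph.fromRel_adj]

@[simp] lemma Q_adj_KE (k : Fin (m-1)) (e : Fin (m+2)) :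
    (Q m X₂).Adj (Sum.inl (Sum.inl k)) (Sum.inr e) := by
  simp [Q, SimpleGraph.fromRel_adj]

@[simp] lemma Q_adj_XE (u : Fin (m+1)) (e : Fin (m+2)) :
    (Q m X₂).Adj (Sum.inl (Sum.inr u)) (Sum.inr e) := by
  simp [Q, SimpleGraph.fromRel_adj]

@[simp] lemma Q_adj_XX (u u' : Fin (m+1)) :
    (Q m X₂).Adj (Sum.inl (Sum.inr u)) (Sum.inl (Sum.inr u')) ↔ X₂.Adj u u' := by
  simp only [Q, SimpleGraph.fromRel_adj, ne_eq, Sum.inl.injEq, Sum.inr.injEq]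
  constructor
  · rintro ⟨h, h1 | h1⟩
    · exact h1
    · exact h1.symm
  · intro h; exact ⟨X₂.ne_of_adj h, Or.inl h⟩

open scoped Classical

variable [DecidableRel X₂.Adj]

/-- K-part of a set. -/
noncomputable def cK (A : Finset ((Fin (m - 1) ⊕ Fin (m + 1)) ⊕ Fin (m + 2))) :
    Finset (Fin (m-1)) := univ.filter fun k => Sum.inl (Sum.inl k) ∈ A

/-- X₂-part of a set. -/
noncomputable def cX (A : Finset ((Fin (m - 1) ⊕ Fin (m + 1)) ⊕ Fin (m + 2))) :
    Finset (Fin (m+1)) := univ.filter fun u => Sum.inl (Sum.inr u) ∈ A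

/-- E-part of a set. -/
noncomputable def cE (A : Finset ((Fin (m - 1) ⊕ Fin (m + 1)) ⊕ Fin (m + 2))) :
    Finset (Fin (m+2)) := univ.filter fun e => Sum.inr e ∈ A

@[simp] lemma mem_cK {A} {k : Fin (m-1)} : k ∈ cK A ↔ Sum.inl (Sum.inl k) ∈ A := by
  simp [cK]

@[simp] lemma mem_cX {A} {u : Fin (m+1)} : u ∈ cX A ↔ Sum.inl (Sum.inr u) ∈ A := by
  simp [cX]

@[simp] lemma mem_cE {A} {e : Fin (m+2)} : e ∈ cE A ↔ Sum.inr e ∈ A := by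
  simp [cE]

lemma card_cK_compl (A : Finset ((Fin (m - 1) ⊕ Fin (m + 1)) ⊕ Fin (m + 2))) :
    (cK A).card + (cK Aᶜ).card = m - 1 := by
  have h : cK Aᶜ = univ.filter fun k => ¬ (Sum.inl (Sum.inl k) ∈ A) := by
    ext k; simp [cK]
  rw [cK, h, Finset.card_filter_add_card_filter_not]
  simp

lemma card_cX_compl (A : Finset ((Fin (m - 1) ⊕ Fin (m + 1)) ⊕ Fin (m + 2))) :
    (cX A).card + (cX Aᶜ).card = m + 1 := by
  have h : cX Aᶜ = univ.filter fun u => ¬ (Sum.inl (Sum.inr u) ∈ A) := by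
    ext u; simp [cX]
  rw [cX, h, Finset.card_filter_add_card_filter_not]
  simp

lemma card_cE_compl (A : Finset ((Fin (m - 1) ⊕ Fin (m + 1)) ⊕ Fin (m + 2))) :
    (cE A).card + (cE Aᶜ).card = m + 2 := by
  have h : cE Aᶜ = univ.filter fun e => ¬ (Sum.inr e ∈ A) := by
    ext e; simp [cE]
  rw [cE, h, Finset.card_filter_add_card_filter_not]
  simp

lemma degIn_E (A : Finset ((Fin (m - 1) ⊕ Fin (m + 1)) ⊕ Fin (m + 2))) (e : Fin (m+2)) :
    degIn (Q m X₂) A (Sum.inr e) = (cK A).card + (cX A).card := by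
  have h : A.filter (fun y => (Q m X₂).Adj (Sum.inr e) y)
      = (cK A).image (fun k => Sum.inl (Sum.inl k)) ∪ (cX A).image (fun u => Sum.inl (Sum.inr u)) := by
    ext v
    rcases v with (k | u) | f <;> simp
  unfold degIn
  rw [h, card_union_of_disjoint, card_image_of_injective _ (by intro a b hab; simpa using hab),
    card_image_of_injective _ (by intro a b hab; simpa using hab)]
  rw [disjoint_left]
  rintro v hv hv'
  simp only [mem_image] at hv hv'
  obtain ⟨k, -, rfl⟩ := hv
  obtain ⟨u, -, hu⟩ := hv'
  exact absurd hu (by simp)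

lemma degIn_K (A : Finset ((Fin (m - 1) ⊕ Fin (m + 1)) ⊕ Fin (m + 2))) (k : Fin (m-1)) :
    degIn (Q m X₂) A (Sum.inl (Sum.inl k)) = ((cK A).erase k).card + (cE A).card := by
  have h : A.filter (fun y => (Q m X₂).Adj (Sum.inl (Sum.inl k)) y)
      = ((cK A).erase k).image (fun k' => Sum.inl (Sum.inl k')) ∪ (cE A).image Sum.inr := by
    ext v
    rcases v with (k' | u) | f <;> simp [ne_comm, and_comm]
  unfold degIn
  rw [h, card_union_of_disjoint, card_image_of_injective _ (by intro a b hab; simpa using hab),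
    card_image_of_injective _ Sum.inr_injective]
  rw [disjoint_left]
  rintro v hv hv'
  simp only [mem_image] at hv hv'
  obtain ⟨k', -, rfl⟩ := hv
  obtain ⟨f, -, hf⟩ := hv'
  exact absurd hf (by simp)

lemma degIn_X (A : Finset ((Fin (m - 1) ⊕ Fin (m + 1)) ⊕ Fin (m + 2))) (u : Fin (m+1)) :
    degIn (Q m X₂) A (Sum.inl (Sum.inr u)) =
      ((cX A).filter (fun w => X₂.Adj u w)).card + (cE A).card := by
  have h : A.filter (fun y => (Q m X₂).Adj (Sum.inl (Sum.inr u)) y)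
      = ((cX A).filter (fun w => X₂.Adj u w)).image (fun u' => Sum.inl (Sum.inr u'))
        ∪ (cE A).image Sum.inr := by
    ext v
    rcases v with (k' | u') | f <;> simp [and_comm]
  unfold degIn
  rw [h, card_union_of_disjoint, card_image_of_injective _ (by intro a b hab; simpa using hab),
    card_image_of_injective _ Sum.inr_injective]
  rw [disjoint_left]
  rintro v hv hv'
  simp only [mem_image] at hv hv'
  obtain ⟨u', -, rfl⟩ := hv
  obtain ⟨f, -, hf⟩ := hv'
  exact absurd hf (by simp)

lemma cK_card_le (A : Finset ((Fin (m - 1) ⊕ Fin (m + 1)) ⊕ Fin (m + 2))) :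
    (cK A).card ≤ m - 1 := by
  simpa using card_le_card (subset_univ (cK A))

/-- Any side of an internal partition must meet the E part. -/
lemma cE_nonempty (hm : 2 < m) (hX₂ : X₂.IsRegularOfDegree (m - 2))
    (S : Finset ((Fin (m - 1) ⊕ Fin (m + 1)) ⊕ Fin (m + 2))) (hS : S.Nonempty)
    (hd : ∀ x ∈ S, m ≤ degIn (Q m X₂) S x) : (cE S).Nonempty := by
  by_contra h
  have hE0 : (cE S).card = 0 := by
    simpa [Finset.not_nonempty_iff_eq_empty.mp h]
  obtain ⟨y, hy⟩ := hS
  rcases y with (k | u) | e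
  · have hdy := hd _ hy
    rw [degIn_K, hE0] at hdy
    have h1 : ((cK S).erase k).card + 1 = (cK S).card :=
      card_erase_add_one (by simpa using hy)
    have h2 := cK_card_le S
    omega
  · have hdy := hd _ hy
    rw [degIn_X, hE0] at hdy
    have h1 : (cX S).filter (fun w => X₂.Adj u w) ⊆ X₂.neighborFinset u := by
      intro w hw
      rw [SimpleGraph.mem_neighborFinset]
      exact (mem_filter.mp hw).2
    have h2 : ((cX S).filter (fun w => X₂.Adj u w)).card ≤ m - 2 := by
      have := card_le_card h1
      rwa [SimpleGraph.card_neighborFinset_eq_degree, hX₂ u] at this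
    omega
  · exact h ⟨e, by simpa using hy⟩

/-- The contradiction in the case where one side misses the K part entirely. -/
lemma aux (hm : 2 < m) (hX₂ : X₂.IsRegularOfDegree (m - 2))
    (A B : Finset ((Fin (m - 1) ⊕ Fin (m + 1)) ⊕ Fin (m + 2))) (hB : B = Aᶜ)
    (hdA : ∀ x ∈ A, m ≤ degIn (Q m X₂) A x)
    (hdB : ∀ y ∈ B, m ≤ degIn (Q m X₂) B y)
    (ha2 : (cX A).card = m) : False := by
  have hsum : (cX A).card + (cX B).card = m + 1 := by rw [hB]; exact card_cX_compl A
  have hb2 : (cX B).card = 1 := by omega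
  obtain ⟨v, hv⟩ := card_eq_one.mp hb2
  have hvB : Sum.inl (Sum.inr v) ∈ B := by
    have : v ∈ cX B := by rw [hv]; exact mem_singleton_self v
    simpa using this
  -- the lone X₂-vertex of B has no X₂-neighbor in B, so it needs m E-vertices in B
  have hdb := hdB _ hvB
  rw [degIn_X] at hdb
  have hf0 : ((cX B).filter (fun w => X₂.Adj v w)).card = 0 := by
    rw [hv]
    simp [filter_singleton, X₂.irrefl]
  have hb3 : m ≤ (cE B).card := by omega
  have hsumE : (cE A).card + (cE B).card = m + 2 := by rw [hB]; exact card_cE_compl A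
  have ha3 : (cE A).card ≤ 2 := by omega
  -- pick an X₂-neighbor u of v; it lies in A
  have hdeg : (X₂.neighborFinset v).card = m - 2 := by
    rw [SimpleGraph.card_neighborFinset_eq_degree]; exact hX₂ v
  have hne : (X₂.neighborFinset v).Nonempty := by
    rw [← card_pos, hdeg]; omega
  obtain ⟨u, hu⟩ := hne
  rw [SimpleGraph.mem_neighborFinset] at hu
  have huA : Sum.inl (Sum.inr u) ∈ A := by
    by_contra huA
    have : Sum.inl (Sum.inr u) ∈ B := by rw [hB]; simpa using huA
    have : u ∈ cX B := by simpa using this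
    rw [hv, mem_singleton] at this
    exact X₂.ne_of_adj hu this.symm
  have hvA : Sum.inl (Sum.inr v) ∉ A := by
    intro hvA
    have : Sum.inl (Sum.inr v) ∈ Aᶜ := by rw [← hB]; exact hvB
    simp at this
    exact this hvA
  -- u has at most m-3 X₂-neighbors in A
  have hda := hdA _ huA
  rw [degIn_X] at hda
  have hsub : (cX A).filter (fun w => X₂.Adj u w) ⊆ (X₂.neighborFinset u).erase v := by
    intro w hw
    rw [mem_filter] at hw
    rw [mem_erase, SimpleGraph.mem_neighborFinset]
    refine ⟨?_, hw.2⟩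
    rintro rfl
    exact hvA (by simpa using hw.1)
  have hcard : ((cX A).filter (fun w => X₂.Adj u w)).card ≤ m - 2 - 1 := by
    have h1 := card_le_card hsub
    rwa [card_erase_of_mem (by rw [SimpleGraph.mem_neighborFinset]; exact hu.symm),
      SimpleGraph.card_neighborFinset_eq_degree, hX₂ u] at h1
  omega

end Aux

/-- For every m > 2 and every (m-2)-regular graph X₂ on m+1 vertices, the 2m-regular
graph Q m X₂ has no internal partition. -/
theorem Q_no_internal_partition (m : ℕ) (hm : 2 < m)
    (X₂ : SimpleGraph (Fin (m + 1))) [DecidableRel X₂.Adj] (hX₂ : X₂.IsRegularOfDegree (m - 2)) :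
    ¬ ∃ A : Finset ((Fin (m - 1) ⊕ Fin (m + 1)) ⊕ Fin (m + 2)), A.Nonempty ∧ Aᶜ.Nonempty ∧
      (∀ x ∈ A, m ≤ degIn (Q m X₂) A x) ∧
      (∀ y ∈ Aᶜ, m ≤ degIn (Q m X₂) Aᶜ y) := by
  rintro ⟨A, hA, hAc, hdA, hdB⟩
  have hKsum := card_cK_compl A
  have hXsum := card_cX_compl A
  have hEsum := card_cE_compl A
  -- both sides meet the E part
  obtain ⟨eA, heA⟩ := cE_nonempty hm hX₂ A hA hdA
  obtain ⟨eB, heB⟩ := cE_nonempty hm hX₂ Aᶜ hAc hdB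
  -- hence both sides have exactly m vertices in K ∪ X₂
  have h1 : m ≤ (cK A).card + (cX A).card := by
    have := hdA _ (by simpa using heA)
    rwa [degIn_E] at this
  have h2 : m ≤ (cK Aᶜ).card + (cX Aᶜ).card := by
    have := hdB _ (by simpa using heB)
    rwa [degIn_E] at this
  have hAm : (cK A).card + (cX A).card = m := by omega
  have hBm : (cK Aᶜ).card + (cX Aᶜ).card = m := by omega
  by_cases hk1 : (cK A).card = 0
  · exact aux hm hX₂ A Aᶜ rfl hdA hdB (by omega)
  by_cases hk2 : (cK Aᶜ).card = 0
  · refine aux hm hX₂ Aᶜ A (compl_compl A).symm hdB ?_ (by omega)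
    simpa [compl_compl] using hdA
  -- both sides contain K-vertices: count E-vertices needed on each side
  obtain ⟨kA, hkA⟩ := card_pos.mp (Nat.pos_of_ne_zero hk1)
  obtain ⟨kB, hkB⟩ := card_pos.mp (Nat.pos_of_ne_zero hk2)
  have h3 := hdA _ (by simpa using hkA)
  rw [degIn_K] at h3
  have h4 := hdB _ (by simpa using hkB)
  rw [degIn_K] at h4
  have e3 : ((cK A).erase kA).card + 1 = (cK A).card := card_erase_add_one hkA
  have e4 : ((cK Aᶜ).erase kB).card + 1 = (cK Aᶜ).card := card_erase_add_one hkB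
  have hK3 := cK_card_le A
  omega
end
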